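/- arXiv:1004.4677 — 7 statements merged into one kernel-verified Lean document; each statement's English description precedes it below -/
import Mathlib

section
/- Suppose a group with length function (G, L) admits a combing {f_n} with fellow-traveling function ψ as in axiom (C2). Then for every (m+1)-tuple (g₀, …, g_m) ∈ G^{m+1} there exist reparameterizations σ₀, …, σ_m such that for all n ≥ 0 and all 0 ≤ i ≤ m−1, d(f_{σ_i(n)}(g_i), f_{σ_{i+1}(n)}(g_{i+1})) ≤ ψ(d(g_i, g_{i+1})). -/
/-- A reparameterization `σ : ℕ → ℕ`: `σ 0 = 0`, `σ (n+1) ∈ {σ n, σ n + 1}`, `σ n → ∞`. -/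
def IsReparam (σ : ℕ → ℕ) : Prop :=
  σ 0 = 0 ∧ (∀ n, σ (n + 1) = σ n ∨ σ (n + 1) = σ n + 1) ∧
    Filter.Tendsto σ Filter.atTop Filter.atTop

/-- A superadditive function (on the non-negative reals). -/
def Superadditive (ψ : ℝ → ℝ) : Prop :=
  ∀ a b : ℝ, 0 ≤ a → 0 ≤ b → ψ a + ψ b ≤ ψ (a + b)

/-- Synchronize two reparameterizations: produce indices `(p n, q n)` with
`a (p n) = b (q n)` for all `n`. -/
def sync (a b : ℕ → ℕ) : ℕ → ℕ × ℕ
  | 0 => (0, 0)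
  | n + 1 =>
    (if a ((sync a b n).1 + 1) = a (sync a b n).1 ∨
        b ((sync a b n).2 + 1) = b (sync a b n).2 + 1
      then (sync a b n).1 + 1 else (sync a b n).1,
     if b ((sync a b n).2 + 1) = b (sync a b n).2 ∨
        a ((sync a b n).1 + 1) = a (sync a b n).1 + 1
      then (sync a b n).2 + 1 else (sync a b n).2)

lemma sync_eq {a b : ℕ → ℕ} (ha : IsReparam a) (hb : IsReparam b) :
    ∀ n, a (sync a b n).1 = b (sync a b n).2 := by
  intro n
  induction n with
  | zero => simp [sync, ha.1, hb.1]
  | succ n ih =>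
    have h1 := ha.2.1 (sync a b n).1
    have h2 := hb.2.1 (sync a b n).2
    simp only [sync]
    split_ifs <;> omega

lemma sync_sum {a b : ℕ → ℕ} (ha : IsReparam a) (hb : IsReparam b) :
    ∀ n, n ≤ (sync a b n).1 + (sync a b n).2 := by
  intro n
  induction n with
  | zero => simp
  | succ n ih =>
    have h1 := ha.2.1 (sync a b n).1
    have h2 := hb.2.1 (sync a b n).2
    simp only [sync]
    split_ifs <;> omega

lemma sync_fst_step (a b : ℕ → ℕ) (n : ℕ) :
    (sync a b (n + 1)).1 = (sync a b n).1 ∨ (sync a b (n + 1)).1 = (sync a b n).1 + 1 := by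
  simp only [sync]
  split_ifs <;> omega

lemma sync_snd_step (a b : ℕ → ℕ) (n : ℕ) :
    (sync a b (n + 1)).2 = (sync a b n).2 ∨ (sync a b (n + 1)).2 = (sync a b n).2 + 1 := by
  simp only [sync]
  split_ifs <;> omega

lemma unbounded_aux (a b p q : ℕ → ℕ) (heq : ∀ n, a (p n) = b (q n))
    (hsum : ∀ n, n ≤ p n + q n) (hb : Filter.Tendsto b Filter.atTop Filter.atTop) :
    ∀ C, ∃ n, C ≤ p n := by
  intro C
  by_contra h
  push_neg at h
  set B := (Finset.range C).sup a with hB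
  obtain ⟨N, hN⟩ := Filter.eventually_atTop.mp (Filter.tendsto_atTop.mp hb (B + 1))
  have hq : N ≤ q (N + C) := by have := hsum (N + C); have := h (N + C); omega
  have h1 : B + 1 ≤ b (q (N + C)) := hN _ hq
  have h2 : a (p (N + C)) ≤ B := Finset.le_sup (Finset.mem_range.mpr (h (N + C)))
  have := heq (N + C)
  omega

lemma sync_fst_reparam {a b : ℕ → ℕ} (ha : IsReparam a) (hb : IsReparam b) :
    IsReparam (fun n => (sync a b n).1) := by
  refine ⟨rfl, fun n => sync_fst_step a b n, ?_⟩
  refine Monotone.tendsto_atTop_atTop (monotone_nat_of_le_succ fun n => ?_) ?_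
  · rcases sync_fst_step a b n with h | h <;> omega
  · intro C
    obtain ⟨n, hn⟩ := unbounded_aux a b (fun n => (sync a b n).1) (fun n => (sync a b n).2)
      (sync_eq ha hb) (sync_sum ha hb) hb.2.2 C
    exact ⟨n, hn⟩

lemma sync_snd_reparam {a b : ℕ → ℕ} (ha : IsReparam a) (hb : IsReparam b) :
    IsReparam (fun n => (sync a b n).2) := by
  refine ⟨rfl, fun n => sync_snd_step a b n, ?_⟩
  refine Monotone.tendsto_atTop_atTop (monotone_nat_of_le_succ fun n => ?_) ?_
  · rcases sync_snd_step a b n with h | h <;> omega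
  · intro C
    obtain ⟨n, hn⟩ := unbounded_aux b a (fun n => (sync a b n).2) (fun n => (sync a b n).1)
      (fun n => (sync_eq ha hb n).symm)
      (fun n => by have := sync_sum ha hb n; show n ≤ (sync a b n).2 + (sync a b n).1; omega)
      ha.2.2 C
    exact ⟨n, hn⟩

lemma IsReparam.comp {a b : ℕ → ℕ} (ha : IsReparam a) (hb : IsReparam b) :
    IsReparam (fun n => a (b n)) := by
  refine ⟨by show a (b 0) = 0; rw [hb.1, ha.1], fun n => ?_, ha.2.2.comp hb.2.2⟩
  show a (b (n + 1)) = a (b n) ∨ a (b (n + 1)) = a (b n) + 1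
  rcases hb.2.1 n with h | h
  · rw [h]; left; rfl
  · rw [h]; exact ha.2.1 (b n)

/-- If the group with length function `(G, L)` admits a combing `{f_n}`
with fellow-traveling function `ψ` as in axiom (C2), then for every `(m+1)`-tuple
`(g₀, …, g_m)` there are reparameterizations `σ₀, …, σ_m` which fellow-travel
consecutively:  `d (f_{σ_i(n)}(g_i)) (f_{σ_{i+1}(n)}(g_{i+1})) ≤ ψ (d (g_i) (g_{i+1}))`
for all `n` and all `0 ≤ i ≤ m - 1`.  Here `d x y = L (x⁻¹ * y)`. -/
theorem compatible_reparameterizations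
    {G : Type*} [Group G] (L : G → ℝ)
    (hL_nonneg : ∀ g : G, 0 ≤ L g)
    (hL_sub : ∀ g h : G, L (g * h) ≤ L g + L h)
    (hL_inv : ∀ g : G, L g⁻¹ = L g)
    (f : ℕ → G → G)
    (ψ : ℝ → ℝ) (hψ : Superadditive ψ)
    (lam : ℝ) (φ : ℝ → ℕ)
    -- (C1)
    (hC1 : f 0 = id)
    -- (C2), with fellow-traveling function ψ
    (hC2 : ∀ x y : G, ∃ σ σ' : ℕ → ℕ, IsReparam σ ∧ IsReparam σ' ∧
      ∀ n : ℕ, L ((f (σ n) x)⁻¹ * f (σ' n) y) ≤ ψ (L (x⁻¹ * y)))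
    -- (C3)
    (hC3 : ∀ (x : G) (n : ℕ), L ((f n x)⁻¹ * f (n + 1) x) ≤ lam)
    -- (C4), basepoint the identity element
    (hC4 : ∀ (x : G) (n : ℕ), φ (L x) ≤ n → f n x = 1) :
    ∀ (m : ℕ) (g : Fin (m + 1) → G),
      ∃ σ : Fin (m + 1) → ℕ → ℕ,
        (∀ i, IsReparam (σ i)) ∧
        ∀ (n : ℕ) (i : Fin m),
          L ((f (σ i.castSucc n) (g i.castSucc))⁻¹ * f (σ i.succ n) (g i.succ)) ≤
            ψ (L ((g i.castSucc)⁻¹ * g i.succ)) := by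
  intro m
  induction m with
  | zero =>
    intro g
    refine ⟨fun _ => id, fun _ => ⟨rfl, fun n => Or.inr rfl, Filter.tendsto_id⟩, ?_⟩
    intro n i
    exact i.elim0
  | succ m ih =>
    intro g
    obtain ⟨σ, hσ, hbd⟩ := ih (fun i => g i.castSucc)
    obtain ⟨τ, τ', hτ, hτ', hpair⟩ := hC2 (g (Fin.last m).castSucc) (g (Fin.last (m + 1)))
    set a := σ (Fin.last m) with ha_def
    set ρ : ℕ → ℕ := fun n => (sync a τ n).1 with hρ_def
    set ρ' : ℕ → ℕ := fun n => (sync a τ n).2 with hρ'_def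
    have hρ : IsReparam ρ := sync_fst_reparam (hσ _) hτ
    have hρ' : IsReparam ρ' := sync_snd_reparam (hσ _) hτ
    refine ⟨Fin.lastCases (fun n => τ' (ρ' n)) (fun i n => σ i (ρ n)), ?_, ?_⟩
    · intro i
      induction i using Fin.lastCases with
      | last => simpa only [Fin.lastCases_last] using hτ'.comp hρ'
      | cast i => simpa only [Fin.lastCases_castSucc] using (hσ i).comp hρ
    · intro n i
      induction i using Fin.lastCases with
      | last =>
        simp only [Fin.succ_last, Fin.lastCases_castSucc, Fin.lastCases_last]
        have hsync : a (ρ n) = τ (ρ' n) := sync_eq (hσ _) hτ n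
        rw [← ha_def, hsync]
        exact hpair (ρ' n)
      | cast i =>
        simp only [Fin.succ_castSucc, Fin.lastCases_castSucc]
        exact hbd (ρ n) i
end

section
/- Let (X, d) be a metric space, {f_k : X → X}_{k≥0} a family of maps, and λ ≥ 0 with d(f_k(x), f_{k+1}(x)) ≤ λ for all x ∈ X and k ∈ ℕ. Let g₀, …, g_n ∈ X, let ψ be a non-decreasing superadditive function, let m ∈ ℕ, and let σ₀, …, σ_n be reparameterizations with d(f_{σ_i(k)}(g_i), f_{σ_{i+1}(k)}(g_{i+1})) ≤ ψ(d(g_i, g_{i+1})) for all k ∈ ℕ and 0 ≤ i < n. For 0 ≤ i ≤ n let τ_i denote the (n+2)-tuple (f_{σ₀(m)}(g₀), …, f_{σ_i(m)}(g_i), f_{σ_i(m+1)}(g_i), f_{σ_{i+1}(m+1)}(g_{i+1}), …, f_{σ_n(m+1)}(g_n)), and for a tuple (x₀, …, x_l) set w(x₀, …, x_l) = Σ_{j<l} d(x_j, x_{j+1}). Then Σ_{i=0}^{n} w(τ_i) ≤ (2n+2)·ψ(w(g₀, …, g_n)) + (2n+2)·λ. -/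
/-- the weight estimate for the prism homotopy
`H^σ({f_k}; m, m+1)(g₀,…,g_n)`: with `τ i` the `(n+2)`-tuple
`(f_{σ₀(m)}(g₀), …, f_{σ_i(m)}(g_i), f_{σ_i(m+1)}(g_i), …, f_{σ_n(m+1)}(g_n))` and
`w` the sum of consecutive distances, one has
`Σ_{i ≤ n} w (τ i) ≤ (2n+2) ψ (w (g₀,…,g_n)) + (2n+2) λ`. -/
theorem prism_weight_estimate
    {X : Type*} [MetricSpace X]
    (f : ℕ → X → X) (lam : ℝ) (hlam : 0 ≤ lam)
    (hC3 : ∀ (x : X) (k : ℕ), dist (f k x) (f (k + 1) x) ≤ lam)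
    (n : ℕ) (g : ℕ → X)
    (ψ : ℝ → ℝ)
    (hψ_nonneg : ∀ x : ℝ, 0 ≤ x → 0 ≤ ψ x)
    (hψ_mono : ∀ x y : ℝ, 0 ≤ x → x ≤ y → ψ x ≤ ψ y)
    (hψ_superadd : ∀ a b : ℝ, 0 ≤ a → 0 ≤ b → ψ a + ψ b ≤ ψ (a + b))
    (m : ℕ)
    (σ : ℕ → ℕ → ℕ)
    (hσ : ∀ i, i ≤ n → IsReparam (σ i))
    (hft : ∀ (k : ℕ) (i : ℕ), i < n →
      dist (f (σ i k) (g i)) (f (σ (i + 1) k) (g (i + 1))) ≤ ψ (dist (g i) (g (i + 1)))) :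
    let τ : ℕ → ℕ → X := fun i j =>
      if j ≤ i then f (σ j m) (g j) else f (σ (j - 1) (m + 1)) (g (j - 1))
    ∑ i ∈ Finset.range (n + 1), ∑ j ∈ Finset.range (n + 1), dist (τ i j) (τ i (j + 1)) ≤
      (2 * n + 2) * ψ (∑ j ∈ Finset.range n, dist (g j) (g (j + 1))) + (2 * n + 2) * lam := by
  intro τ
  have hτ : ∀ i j : ℕ, τ i j =
      if j ≤ i then f (σ j m) (g j) else f (σ (j - 1) (m + 1)) (g (j - 1)) := fun _ _ => rfl
  have hψ0 : ψ 0 = 0 := by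
    have h1 := hψ_superadd 0 0 le_rfl le_rfl
    have h2 := hψ_nonneg 0 le_rfl
    simp at h1
    linarith
  have hsum : ∀ N : ℕ, ∑ j ∈ Finset.range N, ψ (dist (g j) (g (j + 1))) ≤
      ψ (∑ j ∈ Finset.range N, dist (g j) (g (j + 1))) := by
    intro N
    induction N with
    | zero => simp [hψ0]
    | succ N ih =>
      rw [Finset.sum_range_succ, Finset.sum_range_succ]
      calc ∑ j ∈ Finset.range N, ψ (dist (g j) (g (j + 1))) + ψ (dist (g N) (g (N + 1)))
          ≤ ψ (∑ j ∈ Finset.range N, dist (g j) (g (j + 1))) + ψ (dist (g N) (g (N + 1))) := by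
            linarith
        _ ≤ _ := hψ_superadd _ _ (Finset.sum_nonneg fun _ _ => dist_nonneg) dist_nonneg
  have key : ∀ i, i ≤ n → ∑ j ∈ Finset.range (n + 1), dist (τ i j) (τ i (j + 1)) ≤
      (∑ j ∈ Finset.range n, ψ (dist (g j) (g (j + 1)))) + lam := by
    intro i hi
    have hA : ∑ j ∈ Finset.Ico 0 i, dist (τ i j) (τ i (j + 1)) ≤
        ∑ j ∈ Finset.Ico 0 i, ψ (dist (g j) (g (j + 1))) := by
      apply Finset.sum_le_sum
      intro j hj
      have hji : j < i := (Finset.mem_Ico.mp hj).2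
      rw [hτ, hτ, if_pos (le_of_lt hji), if_pos (show j + 1 ≤ i from hji)]
      exact hft m j (lt_of_lt_of_le hji hi)
    have hB : dist (τ i i) (τ i (i + 1)) ≤ lam := by
      rw [hτ, hτ, if_pos le_rfl, if_neg (by omega)]
      simp only [Nat.add_sub_cancel]
      rcases (hσ i hi).2.1 m with h | h
      · rw [h]; simpa using hlam
      · rw [h]; exact hC3 (g i) (σ i m)
    have hC : ∑ j ∈ Finset.Ico (i + 1) (n + 1), dist (τ i j) (τ i (j + 1)) ≤
        ∑ j ∈ Finset.Ico i n, ψ (dist (g j) (g (j + 1))) := by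
      have h1 : ∑ j ∈ Finset.Ico (i + 1) (n + 1), dist (τ i j) (τ i (j + 1)) ≤
          ∑ j ∈ Finset.Ico (i + 1) (n + 1), ψ (dist (g (j - 1)) (g (j - 1 + 1))) := by
        apply Finset.sum_le_sum
        intro j hj
        obtain ⟨hj1, hj2⟩ := Finset.mem_Ico.mp hj
        rw [hτ, hτ, if_neg (by omega), if_neg (by omega)]
        have h3 : j - 1 + 1 = j := by omega
        have h4 : j + 1 - 1 = j := by omega
        rw [h4]
        have := hft (m + 1) (j - 1) (by omega)
        rw [h3] at this
        rw [h3]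
        exact this
      have h2 : ∑ j ∈ Finset.Ico (i + 1) (n + 1), ψ (dist (g (j - 1)) (g (j - 1 + 1))) =
          ∑ j ∈ Finset.Ico i n, ψ (dist (g j) (g (j + 1))) := by
        rw [Finset.sum_Ico_eq_sum_range, Finset.sum_Ico_eq_sum_range]
        rw [show n + 1 - (i + 1) = n - i from by omega]
        apply Finset.sum_congr rfl
        intro k _
        rw [show i + 1 + k - 1 = i + k from by omega]
      rw [h2] at h1
      exact h1
    have hsplit : ∑ j ∈ Finset.range n, ψ (dist (g j) (g (j + 1))) =
        ∑ j ∈ Finset.Ico 0 i, ψ (dist (g j) (g (j + 1))) +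
        ∑ j ∈ Finset.Ico i n, ψ (dist (g j) (g (j + 1))) := by
      rw [Finset.range_eq_Ico, Finset.sum_Ico_consecutive _ (Nat.zero_le i) hi]
    have hLHS : ∑ j ∈ Finset.range (n + 1), dist (τ i j) (τ i (j + 1)) =
        ∑ j ∈ Finset.Ico 0 i, dist (τ i j) (τ i (j + 1)) + (dist (τ i i) (τ i (i + 1)) +
          ∑ j ∈ Finset.Ico (i + 1) (n + 1), dist (τ i j) (τ i (j + 1))) := by
      rw [Finset.range_eq_Ico,
        ← Finset.sum_Ico_consecutive (fun j => dist (τ i j) (τ i (j + 1)))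
          (Nat.zero_le i) (Nat.le_succ_of_le hi),
        Finset.sum_eq_sum_Ico_succ_bot (Nat.lt_succ_of_le hi)]
    rw [hLHS, hsplit]
    linarith
  have W0 : 0 ≤ ∑ j ∈ Finset.range n, dist (g j) (g (j + 1)) :=
    Finset.sum_nonneg fun _ _ => dist_nonneg
  have hψW : 0 ≤ ψ (∑ j ∈ Finset.range n, dist (g j) (g (j + 1))) := hψ_nonneg _ W0
  calc ∑ i ∈ Finset.range (n + 1), ∑ j ∈ Finset.range (n + 1), dist (τ i j) (τ i (j + 1))
      ≤ ∑ _i ∈ Finset.range (n + 1),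
        ((∑ j ∈ Finset.range n, ψ (dist (g j) (g (j + 1)))) + lam) :=
        Finset.sum_le_sum fun i hi => key i (Nat.lt_succ_iff.mp (Finset.mem_range.mp hi))
    _ = (n + 1 : ℝ) * ((∑ j ∈ Finset.range n, ψ (dist (g j) (g (j + 1)))) + lam) := by
        rw [Finset.sum_const, Finset.card_range]; push_cast; ring
    _ ≤ (n + 1 : ℝ) * (ψ (∑ j ∈ Finset.range n, dist (g j) (g (j + 1))) + lam) := by
        have := hsum n
        have hn : (0 : ℝ) ≤ (n : ℝ) + 1 := by positivity
        nlinarith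
    _ ≤ (2 * n + 2) * ψ (∑ j ∈ Finset.range n, dist (g j) (g (j + 1))) + (2 * n + 2) * lam := by
        have hn : (0 : ℝ) ≤ (n : ℝ) := Nat.cast_nonneg n
        nlinarith
end

section
/- Let (G, L) be a group with length function and (S, w) a G-set equipped with a weight function w : S → [0,∞) satisfying w(gs) ≤ C·L(g) + w(s) for all g ∈ G, s ∈ S and some constant C ≥ 1. For a non-decreasing function f : [0,∞) → (0,∞) define seminorms on finitely supported ℂ-valued functions by |a|_f = Σ_{g∈G} |a(g)|·f(L(g)) on ℂ[G] and |b|_f = Σ_{s∈S} |b(s)|·f(w(s)) on ℂ[S], and let |·|₁ denote the corresponding ℓ¹-norms (f ≡ 1). Let the module action of ℂ[G] on ℂ[S] be (a·b)(s) = Σ_{(g,s') : gs' = s} a(g)·b(s'). Then for every non-decreasing f₂ with f((C+1)x) ≤ f₂(x) for all x ≥ 0, one has |a·b|_f ≤ |a|₁·|b|_{f₂} + |a|_{f₂}·|b|₁ for all finitely supported a and b. -/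
/-- The weighted `ℓ¹`-seminorm `|x|_f = Σ_z |x z| · f (w z)` on finitely supported
`ℂ`-valued functions on a weighted set `(Z, w)`. -/
noncomputable def wSeminorm {Z : Type*} (w : Z → ℝ) (f : ℝ → ℝ) (x : Z →₀ ℂ) : ℝ :=
  x.sum fun z c => ‖c‖ * f (w z)

/-- The module action of `ℂ[G]` on `ℂ[S]`: `(a · b) s = Σ_{g s' = s} a g * b s'`. -/
noncomputable def modAction {G : Type*} [Group G] {S : Type*} [MulAction G S]
    (a : G →₀ ℂ) (b : S →₀ ℂ) : S →₀ ℂ :=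
  a.sum fun g ag => b.sum fun s bs => Finsupp.single (g • s) (ag * bs)

/-!
Each term `a g * b s` of `a · b` lands at `g • s`, whose weight is at most
`C L g + w s ≤ (C + 1) max (L g, w s)`. Hence
`f (w (g • s)) ≤ f₂ (max (L g, w s)) ≤ f₂ (L g) + f₂ (w s)`, and summing
`‖a g‖ ‖b s‖ (f₂ (L g) + f₂ (w s))` over all pairs gives `|a|₁ |b|_{f₂} + |a|_{f₂} |b|₁`.
-/

open Finset

section WeightedSeminorm

variable {Z : Type*} (w : Z → ℝ) (f : ℝ → ℝ)

lemma wSeminorm_eq_sum_of_support_subset (x : Z →₀ ℂ) {t : Finset Z} (h : x.support ⊆ t) :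
    wSeminorm w f x = ∑ z ∈ t, ‖x z‖ * f (w z) :=
  Finsupp.sum_of_support_subset x h _ fun z _ => by simp

lemma wSeminorm_single (z : Z) (c : ℂ) :
    wSeminorm w f (Finsupp.single z c) = ‖c‖ * f (w z) :=
  Finsupp.sum_single_index (by simp)

variable {w f}

lemma wSeminorm_add_le (hf : ∀ z, 0 ≤ f (w z)) (x y : Z →₀ ℂ) :
    wSeminorm w f (x + y) ≤ wSeminorm w f x + wSeminorm w f y := by
  classical
  rw [wSeminorm_eq_sum_of_support_subset w f x subset_union_left,
    wSeminorm_eq_sum_of_support_subset w f y subset_union_right,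
    wSeminorm_eq_sum_of_support_subset w f (x + y) Finsupp.support_add, ← sum_add_distrib]
  gcongr with z
  rw [← add_mul]
  gcongr
  · exact hf z
  · exact norm_add_le (x z) (y z)

lemma wSeminorm_sum_le (hf : ∀ z, 0 ≤ f (w z)) {ι : Type*} (t : Finset ι) (x : ι → Z →₀ ℂ) :
    wSeminorm w f (∑ i ∈ t, x i) ≤ ∑ i ∈ t, wSeminorm w f (x i) := by
  classical
  induction t using Finset.induction_on with
  | empty => simp [wSeminorm]
  | insert i t hi ih =>
    rw [sum_insert hi, sum_insert hi]
    exact (wSeminorm_add_le hf _ _).trans (add_le_add_right ih _)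

end WeightedSeminorm

section ModuleAction

variable {G : Type*} [Group G] {S : Type*} [MulAction G S] {w : S → ℝ} {f : ℝ → ℝ}

lemma wSeminorm_modAction_le_sum (hf : ∀ s, 0 ≤ f (w s)) (a : G →₀ ℂ) (b : S →₀ ℂ) :
    wSeminorm w f (modAction a b) ≤
      ∑ g ∈ a.support, ∑ s ∈ b.support, ‖a g‖ * ‖b s‖ * f (w (g • s)) :=
  calc wSeminorm w f (modAction a b)
      ≤ ∑ g ∈ a.support, wSeminorm w f (∑ s ∈ b.support, .single (g • s) (a g * b s)) :=
        wSeminorm_sum_le hf _ _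
    _ ≤ ∑ g ∈ a.support, ∑ s ∈ b.support, wSeminorm w f (.single (g • s) (a g * b s)) := by
        gcongr with g
        exact wSeminorm_sum_le hf _ _
    _ = ∑ g ∈ a.support, ∑ s ∈ b.support, ‖a g‖ * ‖b s‖ * f (w (g • s)) := by
        simp only [wSeminorm_single, norm_mul]

lemma wSeminorm_modAction_le (L : G → ℝ) {fG fS : ℝ → ℝ} (hf : ∀ s, 0 ≤ f (w s))
    (hsplit : ∀ g s, f (w (g • s)) ≤ fG (L g) + fS (w s)) (a : G →₀ ℂ) (b : S →₀ ℂ) :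
    wSeminorm w f (modAction a b) ≤
      wSeminorm L (fun _ => 1) a * wSeminorm w fS b
        + wSeminorm L fG a * wSeminorm w (fun _ => 1) b :=
  calc wSeminorm w f (modAction a b)
      ≤ ∑ g ∈ a.support, ∑ s ∈ b.support, ‖a g‖ * ‖b s‖ * f (w (g • s)) :=
        wSeminorm_modAction_le_sum hf a b
    _ ≤ ∑ g ∈ a.support, ∑ s ∈ b.support, ‖a g‖ * ‖b s‖ * (fG (L g) + fS (w s)) := by
        gcongr with g _ s _
        exact hsplit g s
    _ = wSeminorm L (fun _ => 1) a * wSeminorm w fS b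
          + wSeminorm L fG a * wSeminorm w (fun _ => 1) b := by
        simp only [wSeminorm_eq_sum_of_support_subset _ _ _ subset_rfl, sum_mul_sum,
          ← sum_add_distrib]
        refine sum_congr rfl fun g _ => sum_congr rfl fun s _ => ?_
        ring

end ModuleAction

lemma apply_max_le_add {φ : ℝ → ℝ} {x y : ℝ} (hx : 0 ≤ φ x) (hy : 0 ≤ φ y) :
    φ (max x y) ≤ φ x + φ y := by
  rcases max_choice x y with h | h <;> rw [h] <;> linarith

theorem module_action_estimate_general
    {G : Type*} [Group G] (L : G → ℝ)
    (hL_nonneg : ∀ g : G, 0 ≤ L g)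
    {S : Type*} [MulAction G S] (w : S → ℝ)
    (hw_nonneg : ∀ s : S, 0 ≤ w s)
    (C : ℝ) (hC : 1 ≤ C)
    (hweight : ∀ (g : G) (s : S), w (g • s) ≤ C * L g + w s)
    (f : ℝ → ℝ)
    (hf_mono : ∀ x y : ℝ, 0 ≤ x → x ≤ y → f x ≤ f y)
    (hf_pos : ∀ x : ℝ, 0 ≤ x → 0 < f x)
    (f₂ : ℝ → ℝ)
    (hf₂_pos : ∀ x : ℝ, 0 ≤ x → 0 < f₂ x)
    (hff₂ : ∀ x : ℝ, 0 ≤ x → f ((C + 1) * x) ≤ f₂ x) :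
    ∀ (a : G →₀ ℂ) (b : S →₀ ℂ),
      wSeminorm w f (modAction a b) ≤
        wSeminorm L (fun _ => 1) a * wSeminorm w f₂ b
          + wSeminorm L f₂ a * wSeminorm w (fun _ => 1) b := by
  refine wSeminorm_modAction_le L (fun s => (hf_pos _ (hw_nonneg s)).le) fun g s => ?_
  set m := max (L g) (w s)
  have hm : 0 ≤ m := (hL_nonneg g).trans (le_max_left _ _)
  have hgs : w (g • s) ≤ (C + 1) * m := by
    have := mul_le_mul_of_nonneg_left (le_max_left (L g) (w s)) (by linarith : 0 ≤ C)
    linarith [hweight g s, le_max_right (L g) (w s)]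
  calc f (w (g • s)) ≤ f ((C + 1) * m) := hf_mono _ _ (hw_nonneg _) hgs
    _ ≤ f₂ m := hff₂ m hm
    _ ≤ f₂ (L g) + f₂ (w s) :=
        apply_max_le_add (hf₂_pos _ (hL_nonneg g)).le (hf₂_pos _ (hw_nonneg s)).le

/-- for a group with length function `(G, L)` and a weighted `G`-set
`(S, w)` with `w (g • s) ≤ C · L g + w s` (`C ≥ 1`), and for non-decreasing positive
`f, f₂` with `f ((C+1) x) ≤ f₂ x`, the module action satisfies
`|a · b|_f ≤ |a|₁ · |b|_{f₂} + |a|_{f₂} · |b|₁`. -/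
theorem module_action_estimate
    {G : Type*} [Group G] (L : G → ℝ)
    (hL_nonneg : ∀ g : G, 0 ≤ L g)
    (hL_sub : ∀ g h : G, L (g * h) ≤ L g + L h)
    (hL_inv : ∀ g : G, L g⁻¹ = L g)
    {S : Type*} [MulAction G S] (w : S → ℝ)
    (hw_nonneg : ∀ s : S, 0 ≤ w s)
    (C : ℝ) (hC : 1 ≤ C)
    (hweight : ∀ (g : G) (s : S), w (g • s) ≤ C * L g + w s)
    (f : ℝ → ℝ)
    (hf_mono : ∀ x y : ℝ, 0 ≤ x → x ≤ y → f x ≤ f y)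
    (hf_pos : ∀ x : ℝ, 0 ≤ x → 0 < f x)
    (f₂ : ℝ → ℝ)
    (hf₂_mono : ∀ x y : ℝ, 0 ≤ x → x ≤ y → f₂ x ≤ f₂ y)
    (hf₂_pos : ∀ x : ℝ, 0 ≤ x → 0 < f₂ x)
    (hff₂ : ∀ x : ℝ, 0 ≤ x → f ((C + 1) * x) ≤ f₂ x) :
    ∀ (a : G →₀ ℂ) (b : S →₀ ℂ),
      wSeminorm w f (modAction a b) ≤
        wSeminorm L (fun _ => 1) a * wSeminorm w f₂ b
          + wSeminorm L f₂ a * wSeminorm w (fun _ => 1) b :=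
  module_action_estimate_general L hL_nonneg w hw_nonneg C hC hweight f hf_mono hf_pos f₂ hf₂_pos
    hff₂
end

section
/- Let f : ℝ → ℝ be differentiable with non-decreasing derivative f', and let r ≥ 1 be a real number with f(r) ≥ r·f(1). Then f(rx) ≥ r·f(x) for all x ≥ 1. -/
/-!
The defect `x ↦ f (r * x) - r * f x` has derivative `r * (f' (r * x) - f' x)`, which is
non-negative for `x ≥ 0` because `r * x ≥ x` and `f'` is non-decreasing. So the defect is
non-decreasing on `[0, ∞)`, and it is non-negative at `x = 1` by the initial condition.
-/

open Set

theorem monotoneOn_comp_const_mul_sub_const_mul {f : ℝ → ℝ} (hf : Differentiable ℝ f)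
    (hf' : Monotone (deriv f)) {r : ℝ} (hr : 1 ≤ r) :
    MonotoneOn (fun x => f (r * x) - r * f x) (Ici 0) := by
  have hderiv : ∀ x, HasDerivAt (fun x => f (r * x) - r * f x)
      (r * (deriv f (r * x) - deriv f x)) x := by
    intro x
    have hscale : HasDerivAt (r * ·) r x := by simpa using (hasDerivAt_id x).const_mul r
    have hcomp : HasDerivAt (fun x => f (r * x)) (deriv f (r * x) * r) x :=
      (hf (r * x)).hasDerivAt.comp x hscale
    rw [mul_sub, mul_comm r]
    exact hcomp.sub ((hf x).hasDerivAt.const_mul r)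
  refine monotoneOn_of_hasDerivWithinAt_nonneg (convex_Ici 0)
    (fun x _ => (hderiv x).continuousAt.continuousWithinAt)
    (fun x _ => (hderiv x).hasDerivWithinAt) fun x hx => ?_
  rw [interior_Ici, mem_Ioi] at hx
  have hx_le : x ≤ r * x := le_mul_of_one_le_left hx.le hr
  exact mul_nonneg (zero_le_one.trans hr) (sub_nonneg.mpr (hf' hx_le))

/-- Let `f : ℝ → ℝ` be differentiable with non-decreasing derivative `f'`,
and let `r ≥ 1` be a real number with `f r ≥ r * f 1`.  Then `f (r * x) ≥ r * f x`
for all `x ≥ 1`. -/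
theorem superadditivity_criterion
    (f : ℝ → ℝ) (hf : Differentiable ℝ f) (hf' : Monotone (deriv f))
    (r : ℝ) (hr : 1 ≤ r) (hinit : r * f 1 ≤ f r) :
    ∀ x : ℝ, 1 ≤ x → r * f x ≤ f (r * x) := by
  intro x hx
  have hmono := monotoneOn_comp_const_mul_sub_const_mul hf hf' hr
    (mem_Ici.mpr zero_le_one) (mem_Ici.mpr (zero_le_one.trans hx)) hx
  simp only [mul_one] at hmono
  linarith
end

section
/- Let 𝓑 be a bounding class with ℒ ⪯ 𝓑, G a finitely generated group with word-length function L, and 𝓗 = {H_α}_{α∈Λ} a finite family of subgroups such that Δ = ker(⊕_{α∈Λ} ℤ[G/H_α] → ℤ) admits a type FF^∞ resolution over ℤ[G]. If some type FF^∞ resolution of Δ over ℤ[G] admits a ℤ-linear contraction {s_n : R_n → R_{n+1}}_{n ≥ −1} with each s_n bounded by an element of 𝓑 (with respect to the weights described below), then every type FF^∞ resolution of Δ over ℤ[G] admits such a 𝓑-bounded contraction. -/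
open scoped BigOperators

/-- A bounding class: a set of non-decreasing positive functions on `[0,∞)`
containing the constant function `1`, weakly closed under non-negative rational
linear combinations and under right composition with affine functions with
non-negative rational coefficients. -/
structure BoundingClass where
  carrier : Set (ℝ → ℝ)
  mono : ∀ f ∈ carrier, ∀ x y : ℝ, 0 ≤ x → x ≤ y → f x ≤ f y
  pos : ∀ f ∈ carrier, ∀ x : ℝ, 0 ≤ x → 0 < f x
  one_mem : (fun _ => (1 : ℝ)) ∈ carrier
  lin_comb : ∀ (n : ℕ) (f : Fin n → (ℝ → ℝ)) (q : Fin n → ℚ),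
    (∀ i, f i ∈ carrier) → (∀ i, 0 ≤ q i) →
    ∃ g ∈ carrier, ∀ x : ℝ, 0 ≤ x → ∑ i, (q i : ℝ) * f i x < g x
  comp_lin : ∀ f ∈ carrier, ∀ a b : ℚ, 0 ≤ a → 0 ≤ b →
    ∃ h ∈ carrier, ∀ x : ℝ, 0 ≤ x → f ((a : ℝ) * x + (b : ℝ)) < h x

/-- The linear bounding class `ℒ = {x ↦ a x + b | a, b ∈ ℚ≥0}`. -/
def LinClass : Set (ℝ → ℝ) :=
  {f | ∃ a b : ℚ, 0 ≤ a ∧ 0 ≤ b ∧ f = fun x => (a : ℝ) * x + (b : ℝ)}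

/-- `𝓑' ⪯ 𝓑`: every element of `𝓑'` is bounded above (on `[0,∞)`) by an element
of `𝓑`. -/
def ClassLE (B' B : Set (ℝ → ℝ)) : Prop :=
  ∀ f ∈ B', ∃ g ∈ B, ∀ x : ℝ, 0 ≤ x → f x ≤ g x

/-- The weighted `ℓ¹`-norm `‖x‖_w = Σ |m_i| · w (s_i)` of an integral chain. -/
noncomputable def wnorm {S : Type*} (w : S → ℝ) (x : S →₀ ℤ) : ℝ :=
  x.sum fun s m => |(m : ℝ)| * w s

variable (G : Type) [Group G]

/-- The `G`-set `⊔_α G/H_α` underlying `⊕_α ℤ[G/H_α]`. -/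
abbrev cosetUnion {Λ : Type} (H : Λ → Subgroup G) : Type := Σ α : Λ, G ⧸ H α

/-- The augmentation `⊕_α ℤ[G/H_α] → ℤ`, sending each coset to `1`. -/
noncomputable def augmentation {Λ : Type} (H : Λ → Subgroup G) :
    ((cosetUnion G H) →₀ ℤ) →ₗ[ℤ] ℤ :=
  Finsupp.lsum ℤ (fun _ => (LinearMap.id : ℤ →ₗ[ℤ] ℤ))

/-- The augmentation kernel `Δ = ker (⊕_α ℤ[G/H_α] → ℤ)`, as a `ℤ`-submodule
(it is `G`-invariant, hence a `ℤ[G]`-submodule). -/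
noncomputable def deltaSub {Λ : Type} (H : Λ → Subgroup G) :
    Submodule ℤ ((cosetUnion G H) →₀ ℤ) :=
  LinearMap.ker (augmentation G H)

/-- The weight `w (g [H_α]) = min_{h ∈ H_α} L (g h)` on `⊔_α G/H_α` induced by a
length function `L` on `G`. -/
noncomputable def cosetWeight {Λ : Type} (H : Λ → Subgroup G) (L : G → ℝ)
    (x : cosetUnion G H) : ℝ :=
  sInf {r : ℝ | ∃ g : G, (QuotientGroup.mk g : G ⧸ H x.1) = x.2 ∧ L g = r}

/-- A type `FF^∞` resolution `⋯ → R₁ → R₀ → Δ → 0` of the augmentation kernel `Δ`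
over `ℤ[G]`: each `R_n` is a finitely generated free `ℤ[G]`-module, realized as
`(G × T n) →₀ ℤ` with `T n` finite; the maps are `ℤ`-linear and `G`-equivariant,
and the sequence is exact. -/
structure FFRes {Λ : Type} (H : Λ → Subgroup G) : Type 1 where
  T : ℕ → Type
  finT : ∀ n, Finite (T n)
  d : ∀ n : ℕ, ((G × T (n + 1)) →₀ ℤ) →ₗ[ℤ] ((G × T n) →₀ ℤ)
  π : ((G × T 0) →₀ ℤ) →ₗ[ℤ] ↥(deltaSub G H)
  d_equivariant : ∀ (n : ℕ) (g : G) (x : (G × T (n + 1)) →₀ ℤ),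
    d n (Finsupp.mapDomain (fun p => (g * p.1, p.2)) x)
      = Finsupp.mapDomain (fun p => (g * p.1, p.2)) (d n x)
  π_equivariant : ∀ (g : G) (x : (G × T 0) →₀ ℤ),
    (↑(π (Finsupp.mapDomain (fun p => (g * p.1, p.2)) x)) : (cosetUnion G H) →₀ ℤ)
      = Finsupp.mapDomain (fun q : cosetUnion G H => (⟨q.1, g • q.2⟩ : cosetUnion G H)) ↑(π x)
  π_surjective : Function.Surjective π
  exact_zero : ∀ x : (G × T 0) →₀ ℤ, π x = 0 ↔ ∃ y, d 0 y = x
  exact_succ : ∀ (n : ℕ) (x : (G × T (n + 1)) →₀ ℤ), d n x = 0 ↔ ∃ y, d (n + 1) y = x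

/-- The resolution `R` admits a `ℤ`-linear chain contraction
`{s_n : R_n → R_{n+1}}_{n ≥ -1}` (with `R_{-1} = Δ`), each `s_n` being bounded by an
element of `𝓑` with respect to the weights `w (Σ λᵢ gᵢ sᵢ) = Σ |λᵢ| (L gᵢ + 1)` on
`R_n` and the `ℓ¹`-extension of `w (g[H_α]) = min_{h ∈ H_α} L (g h)` on `Δ`;
i.e. the relative Dehn functions computed from `R` are `𝓑`-bounded. -/
def BddContraction (B : BoundingClass) {Λ : Type} (H : Λ → Subgroup G) (L : G → ℝ)
    (R : FFRes G H) : Prop :=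
  ∃ (sΔ : ↥(deltaSub G H) →ₗ[ℤ] ((G × R.T 0) →₀ ℤ))
    (s : ∀ n : ℕ, ((G × R.T n) →₀ ℤ) →ₗ[ℤ] ((G × R.T (n + 1)) →₀ ℤ)),
    -- the chain contraction identities
    (∀ v : ↥(deltaSub G H), R.π (sΔ v) = v) ∧
    (∀ x : (G × R.T 0) →₀ ℤ, R.d 0 (s 0 x) + sΔ (R.π x) = x) ∧
    (∀ (n : ℕ) (x : (G × R.T (n + 1)) →₀ ℤ),
      R.d (n + 1) (s (n + 1) x) + s n (R.d n x) = x) ∧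
    -- each `s_n` is bounded by an element of `𝓑`
    (∃ φ ∈ B.carrier, ∀ v : ↥(deltaSub G H),
      wnorm (fun p : G × R.T 0 => L p.1 + 1) (sΔ v) ≤ φ (wnorm (cosetWeight G H L) ↑v)) ∧
    (∀ n : ℕ, ∃ φ ∈ B.carrier, ∀ x : (G × R.T n) →₀ ℤ,
      wnorm (fun p : G × R.T (n + 1) => L p.1 + 1) (s n x)
        ≤ φ (wnorm (fun p : G × R.T n => L p.1 + 1) x))

/-!
Free `ℤ[G]`-modules are projective and the resolutions are exact, so any two type `FF^∞`
resolutions `R`, `R₀` of `Δ` are related by `G`-equivariant comparison maps `f : R → R₀`,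
`g : R₀ → R` and an equivariant homotopy `h` from the identity to `g ∘ f`. Since `L` is
subadditive, an equivariant map between finitely generated free modules is linearly bounded for
the weights `L + 1`. If `s` contracts `R₀`, then `g ∘ s ∘ f + h` contracts `R`, and it is
`𝓑`-bounded because `𝓑` absorbs composition with linear maps, sums, and (as `ℒ ⪯ 𝓑`) linear
functions.
-/

section WeightedNorm

variable {S S' : Type*} {w : S → ℝ} {w' : S' → ℝ}

lemma wnorm_zero (w : S → ℝ) : wnorm w 0 = 0 := Finsupp.sum_zero_index

lemma wnorm_single (w : S → ℝ) (a : S) (m : ℤ) :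
    wnorm w (Finsupp.single a m) = |(m : ℝ)| * w a :=
  Finsupp.sum_single_index (by simp)

lemma wnorm_nonneg (hw : ∀ s, 0 ≤ w s) (x : S →₀ ℤ) : 0 ≤ wnorm w x :=
  Finset.sum_nonneg fun s _ => mul_nonneg (abs_nonneg _) (hw s)

lemma wnorm_smul (w : S → ℝ) (m : ℤ) (x : S →₀ ℤ) :
    wnorm w (m • x) = |(m : ℝ)| * wnorm w x := by
  rw [wnorm, wnorm, Finsupp.sum_smul_index' (by simp), Finsupp.mul_sum]
  simp only [smul_eq_mul, Int.cast_mul, abs_mul, mul_assoc]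

lemma wnorm_add_of_disjoint (w : S → ℝ) {x y : S →₀ ℤ} (h : Disjoint x.support y.support) :
    wnorm w (x + y) = wnorm w x + wnorm w y :=
  Finsupp.sum_add_index_of_disjoint h _

lemma wnorm_add_le (hw : ∀ s, 0 ≤ w s) (x y : S →₀ ℤ) :
    wnorm w (x + y) ≤ wnorm w x + wnorm w y := by
  classical
  have hsum {z : S →₀ ℤ} (hz : z.support ⊆ x.support ∪ y.support) :
      wnorm w z = ∑ s ∈ x.support ∪ y.support, |(z s : ℝ)| * w s :=
    Finsupp.sum_of_support_subset z hz _ (by simp)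
  rw [hsum Finsupp.support_add, hsum Finset.subset_union_left,
    hsum Finset.subset_union_right, ← Finset.sum_add_distrib]
  refine Finset.sum_le_sum fun s _ => ?_
  rw [← add_mul, Finsupp.add_apply, Int.cast_add]
  exact mul_le_mul_of_nonneg_right (abs_add_le _ _) (hw s)

lemma wnorm_map_le_of_single (F : (S →₀ ℤ) →ₗ[ℤ] (S' →₀ ℤ)) (hw' : ∀ s, 0 ≤ w' s) {C : ℝ}
    (hF : ∀ a, wnorm w' (F (Finsupp.single a 1)) ≤ C * w a) (x : S →₀ ℤ) :
    wnorm w' (F x) ≤ C * wnorm w x := by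
  induction x using Finsupp.induction with
  | zero => simp [wnorm_zero]
  | single_add a m x ha _ ih =>
    have hdisj : Disjoint (Finsupp.single a m).support x.support :=
      Finset.disjoint_of_subset_left Finsupp.support_single_subset
        (Finset.disjoint_singleton_left.mpr ha)
    calc wnorm w' (F (Finsupp.single a m + x))
        ≤ |(m : ℝ)| * wnorm w' (F (Finsupp.single a 1)) + wnorm w' (F x) := by
          rw [map_add, ← Finsupp.smul_single_one, map_smul, ← wnorm_smul]
          exact wnorm_add_le hw' _ _
      _ ≤ |(m : ℝ)| * (C * w a) + C * wnorm w x := by gcongr; exact hF a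
      _ = C * wnorm w (Finsupp.single a m + x) := by
          rw [wnorm_add_of_disjoint w hdisj, wnorm_single]; ring

end WeightedNorm

def IsLinearlyBounded {X Y : Type*} (ν : X → ℝ) (μ : Y → ℝ) (F : X → Y) : Prop :=
  ∃ C, 0 ≤ C ∧ ∀ x, μ (F x) ≤ C * ν x

namespace BoundingClass

variable (B : BoundingClass) {X Y Z : Type*}

def IsBounded (ν : X → ℝ) (μ : Y → ℝ) (F : X → Y) : Prop :=
  ∃ φ ∈ B.carrier, ∀ x, μ (F x) ≤ φ (ν x)

variable {B} {ν : X → ℝ} {μ : Y → ℝ} {κ : Z → ℝ}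

lemma IsBounded.comp_isLinearlyBounded {s : Y → Z} {f : X → Y} (hs : B.IsBounded μ κ s)
    (hf : IsLinearlyBounded ν μ f) (hν : ∀ x, 0 ≤ ν x) (hμ : ∀ y, 0 ≤ μ y) :
    B.IsBounded ν κ (s ∘ f) := by
  obtain ⟨φ, hφ, hsφ⟩ := hs
  obtain ⟨C, hC0, hfC⟩ := hf
  obtain ⟨q, hq⟩ := exists_rat_gt C
  have hq0 : (0 : ℚ) ≤ q := by exact_mod_cast hC0.trans hq.le
  obtain ⟨ψ, hψ, hφψ⟩ := B.comp_lin φ hφ q 0 hq0 le_rfl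
  refine ⟨ψ, hψ, fun x => (hsφ (f x)).trans ?_⟩
  have hqψ := hφψ (ν x) (hν x)
  rw [Rat.cast_zero, add_zero] at hqψ
  refine (B.mono φ hφ _ _ (hμ (f x)) ?_).trans hqψ.le
  exact (hfC x).trans (mul_le_mul_of_nonneg_right hq.le (hν x))

lemma _root_.IsLinearlyBounded.comp_isBounded {g : Y → Z} {s : X → Y}
    (hg : IsLinearlyBounded μ κ g) (hs : B.IsBounded ν μ s) (hν : ∀ x, 0 ≤ ν x) :
    B.IsBounded ν κ (g ∘ s) := by
  obtain ⟨φ, hφ, hsφ⟩ := hs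
  obtain ⟨C, hC0, hgC⟩ := hg
  obtain ⟨q, hq⟩ := exists_rat_gt C
  have hq0 : (0 : ℚ) ≤ q := by exact_mod_cast hC0.trans hq.le
  obtain ⟨ψ, hψ, hqψ⟩ := B.lin_comb 1 ![φ] ![q] (Fin.forall_fin_one.2 hφ) (Fin.forall_fin_one.2 hq0)
  refine ⟨ψ, hψ, fun x => ?_⟩
  have hqψx := hqψ (ν x) (hν x)
  simp only [Fin.sum_univ_one, Matrix.cons_val_zero] at hqψx
  calc κ (g (s x)) ≤ C * μ (s x) := hgC (s x)
    _ ≤ C * φ (ν x) := mul_le_mul_of_nonneg_left (hsφ x) hC0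
    _ ≤ q * φ (ν x) := mul_le_mul_of_nonneg_right hq.le (B.pos φ hφ _ (hν x)).le
    _ ≤ ψ (ν x) := hqψx.le

lemma _root_.IsLinearlyBounded.isBounded (hLB : ClassLE LinClass B.carrier) {F : X → Y}
    (hF : IsLinearlyBounded ν μ F) (hν : ∀ x, 0 ≤ ν x) : B.IsBounded ν μ F := by
  obtain ⟨C, hC0, hFC⟩ := hF
  obtain ⟨q, hq⟩ := exists_rat_gt C
  have hq0 : (0 : ℚ) ≤ q := by exact_mod_cast hC0.trans hq.le
  obtain ⟨ψ, hψ, hqψ⟩ := hLB _ ⟨q, 0, hq0, le_rfl, rfl⟩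
  refine ⟨ψ, hψ, fun x => (hFC x).trans ?_⟩
  have hqψx := hqψ (ν x) (hν x)
  rw [Rat.cast_zero, add_zero] at hqψx
  exact (mul_le_mul_of_nonneg_right hq.le (hν x)).trans hqψx

lemma IsBounded.add {S : Type*} {w : S → ℝ} {F F' : X → S →₀ ℤ}
    (hF : B.IsBounded ν (wnorm w) F) (hF' : B.IsBounded ν (wnorm w) F') (hν : ∀ x, 0 ≤ ν x)
    (hw : ∀ s, 0 ≤ w s) : B.IsBounded ν (wnorm w) (F + F') := by
  obtain ⟨φ, hφ, hFφ⟩ := hF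
  obtain ⟨φ', hφ', hFφ'⟩ := hF'
  obtain ⟨ψ, hψ, hsum⟩ := B.lin_comb 2 ![φ, φ'] ![1, 1]
    (fun i => by fin_cases i <;> assumption) (fun i => by fin_cases i <;> norm_num)
  refine ⟨ψ, hψ, fun x => ?_⟩
  have hsumx := hsum (ν x) (hν x)
  simp only [Fin.sum_univ_two, Matrix.cons_val_zero, Matrix.cons_val_one, Rat.cast_one,
    one_mul] at hsumx
  rw [Pi.add_apply]
  linarith [wnorm_add_le hw (F x) (F' x), hFφ x, hFφ' x]

end BoundingClass

section Translation

variable {G}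

noncomputable def leftTranslate {T : Type} (g : G) : ((G × T) →₀ ℤ) →ₗ[ℤ] ((G × T) →₀ ℤ) :=
  Finsupp.lmapDomain ℤ ℤ fun p => (g * p.1, p.2)

lemma leftTranslate_single {T : Type} (g a : G) (t : T) (m : ℤ) :
    leftTranslate g (Finsupp.single (a, t) m) = Finsupp.single (g * a, t) m :=
  Finsupp.mapDomain_single

lemma leftTranslate_leftTranslate {T : Type} (g g' : G) (x : (G × T) →₀ ℤ) :
    leftTranslate g (leftTranslate g' x) = leftTranslate (g * g') x := by
  simp only [leftTranslate, Finsupp.lmapDomain_apply, ← Finsupp.mapDomain_comp]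
  congr 1
  ext p <;> simp [mul_assoc]

lemma leftTranslate_one {T : Type} (x : (G × T) →₀ ℤ) : leftTranslate (1 : G) x = x := by
  simp only [leftTranslate, Finsupp.lmapDomain_apply, one_mul]
  exact Finsupp.mapDomain_id

lemma single_eq_leftTranslate {T : Type} (g : G) (t : T) (m : ℤ) :
    Finsupp.single (g, t) m = leftTranslate g (Finsupp.single ((1 : G), t) m) := by
  rw [leftTranslate_single, mul_one]

def IsEquivariant {S T : Type} (F : ((G × S) →₀ ℤ) →ₗ[ℤ] ((G × T) →₀ ℤ)) : Prop :=
  ∀ g x, F (leftTranslate g x) = leftTranslate g (F x)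

lemma isEquivariant_id {S : Type} : IsEquivariant (LinearMap.id : ((G × S) →₀ ℤ) →ₗ[ℤ] _) :=
  fun _ _ => rfl

lemma IsEquivariant.comp {S T U : Type} {F : ((G × T) →₀ ℤ) →ₗ[ℤ] ((G × U) →₀ ℤ)}
    {F' : ((G × S) →₀ ℤ) →ₗ[ℤ] ((G × T) →₀ ℤ)} (hF : IsEquivariant F) (hF' : IsEquivariant F') :
    IsEquivariant (F ∘ₗ F') := fun g x => by
  rw [LinearMap.comp_apply, hF', hF, LinearMap.comp_apply]

lemma IsEquivariant.sub {S T : Type} {F F' : ((G × S) →₀ ℤ) →ₗ[ℤ] ((G × T) →₀ ℤ)}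
    (hF : IsEquivariant F) (hF' : IsEquivariant F') : IsEquivariant (F - F') := fun g x => by
  rw [LinearMap.sub_apply, hF, hF', ← map_sub, LinearMap.sub_apply]

lemma ext_of_equivariant {S : Type} {M : Type*} [AddCommGroup M] [Module ℤ M] (ρ : G → M → M)
    {F F' : ((G × S) →₀ ℤ) →ₗ[ℤ] M} (hF : ∀ g x, F (leftTranslate g x) = ρ g (F x))
    (hF' : ∀ g x, F' (leftTranslate g x) = ρ g (F' x))
    (h : ∀ t, F (Finsupp.single ((1 : G), t) 1) = F' (Finsupp.single ((1 : G), t) 1)) :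
    F = F' :=
  Finsupp.basisSingleOne.ext fun ⟨g, t⟩ => by
    rw [Finsupp.coe_basisSingleOne]
    dsimp only
    rw [single_eq_leftTranslate, hF, hF', h]

noncomputable def equivariantExt {S T : Type} (v : S → (G × T) →₀ ℤ) :
    ((G × S) →₀ ℤ) →ₗ[ℤ] ((G × T) →₀ ℤ) :=
  Finsupp.linearCombination ℤ fun p => leftTranslate p.1 (v p.2)

lemma equivariantExt_single_one {S T : Type} (v : S → (G × T) →₀ ℤ) (t : S) :
    equivariantExt v (Finsupp.single ((1 : G), t) 1) = v t := by
  rw [equivariantExt, Finsupp.linearCombination_single, one_smul, leftTranslate_one]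

lemma isEquivariant_equivariantExt {S T : Type} (v : S → (G × T) →₀ ℤ) :
    IsEquivariant (equivariantExt v) := fun g x => by
  induction x using Finsupp.induction_linear with
  | zero => simp
  | add x y hx hy => simp only [map_add, hx, hy]
  | single p m =>
    obtain ⟨a, t⟩ := p
    simp only [leftTranslate_single, equivariantExt, Finsupp.linearCombination_single, map_smul,
      leftTranslate_leftTranslate]

lemma exists_equivariant_lift {S T : Type} {M : Type*} [AddCommGroup M] [Module ℤ M]
    (ρ : G → M → M) (p : ((G × T) →₀ ℤ) →ₗ[ℤ] M) (hp : ∀ g y, p (leftTranslate g y) = ρ g (p y))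
    (F : ((G × S) →₀ ℤ) →ₗ[ℤ] M) (hF : ∀ g x, F (leftTranslate g x) = ρ g (F x))
    (hFp : ∀ x, ∃ y, p y = F x) :
    ∃ F' : ((G × S) →₀ ℤ) →ₗ[ℤ] ((G × T) →₀ ℤ), IsEquivariant F' ∧ ∀ x, p (F' x) = F x := by
  choose v hv using fun t : S => hFp (Finsupp.single ((1 : G), t) 1)
  refine ⟨equivariantExt v, isEquivariant_equivariantExt v, fun x => ?_⟩
  refine LinearMap.congr_fun (ext_of_equivariant ρ (F := p ∘ₗ equivariantExt v) ?_ hF ?_) x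
  · intro g x
    rw [LinearMap.comp_apply, isEquivariant_equivariantExt, hp, LinearMap.comp_apply]
  · intro t
    rw [LinearMap.comp_apply, equivariantExt_single_one, hv]

variable {L : G → ℝ}

lemma wnorm_leftTranslate_le (hL_nonneg : ∀ g, 0 ≤ L g) (hL_sub : ∀ g h, L (g * h) ≤ L g + L h)
    {T : Type} (g : G) (x : (G × T) →₀ ℤ) :
    wnorm (fun p : G × T => L p.1 + 1) (leftTranslate g x)
      ≤ (L g + 1) * wnorm (fun p : G × T => L p.1 + 1) x := by
  refine wnorm_map_le_of_single _ (fun p => by linarith [hL_nonneg p.1]) (fun ⟨a, t⟩ => ?_) x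
  rw [leftTranslate_single, wnorm_single, Int.cast_one, abs_one, one_mul]
  nlinarith [hL_sub g a, hL_nonneg g, hL_nonneg a]

lemma IsEquivariant.isLinearlyBounded (hL_nonneg : ∀ g, 0 ≤ L g)
    (hL_sub : ∀ g h, L (g * h) ≤ L g + L h) {S T : Type} [Finite S]
    {F : ((G × S) →₀ ℤ) →ₗ[ℤ] ((G × T) →₀ ℤ)} (hF : IsEquivariant F) :
    IsLinearlyBounded (wnorm fun p : G × S => L p.1 + 1) (wnorm fun p : G × T => L p.1 + 1) F := by
  have hw : ∀ p : G × T, 0 ≤ L p.1 + 1 := fun p => by linarith [hL_nonneg p.1]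
  obtain ⟨C, hC⟩ := (Set.finite_range fun t : S =>
    wnorm (fun p : G × T => L p.1 + 1) (F (Finsupp.single ((1 : G), t) 1))).bddAbove
  refine ⟨max C 0, le_max_right _ _, wnorm_map_le_of_single F hw fun ⟨g, t⟩ => ?_⟩
  rw [single_eq_leftTranslate, hF]
  calc _ ≤ (L g + 1) * wnorm _ (F (Finsupp.single ((1 : G), t) 1)) :=
        wnorm_leftTranslate_le hL_nonneg hL_sub g _
    _ ≤ (L g + 1) * max C 0 :=
        mul_le_mul_of_nonneg_left ((hC ⟨t, rfl⟩).trans (le_max_left _ _))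
          (by linarith [hL_nonneg g])
    _ = max C 0 * (L g + 1) := mul_comm _ _

end Translation

theorem exists_seq_of_forall_exists_succ {X : ℕ → Type*} {P : X 0 → Prop}
    {r : ∀ n, X n → X (n + 1) → Prop} (h₀ : ∃ a, P a) (h₁ : ∀ a, P a → ∃ b, r 0 a b)
    (step : ∀ n a b, r n a b → ∃ c, r (n + 1) b c) :
    ∃ x : ∀ n, X n, P (x 0) ∧ ∀ n, r n (x n) (x (n + 1)) := by
  obtain ⟨a, ha⟩ := h₀
  obtain ⟨b, hb⟩ := h₁ a ha
  let pairs : ∀ n, {p : X n × X (n + 1) // r n p.1 p.2} := fun n =>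
    Nat.rec ⟨(a, b), hb⟩ (fun n p => ⟨(p.1.2, (step n _ _ p.2).choose),
      (step n _ _ p.2).choose_spec⟩) n
  exact ⟨fun n => (pairs n).1.1, ha, fun n => (pairs n).2⟩

namespace FFRes

variable {G} {Λ : Type} {H : Λ → Subgroup G}

structure ChainMap (A B : FFRes G H) where
  map : ∀ n, ((G × A.T n) →₀ ℤ) →ₗ[ℤ] ((G × B.T n) →₀ ℤ)
  equivariant : ∀ n, IsEquivariant (map n)
  π_map : ∀ x, B.π (map 0 x) = A.π x
  d_map : ∀ n x, B.d n (map (n + 1) x) = map n (A.d n x)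

variable {A B C : FFRes G H}

lemma isEquivariant_d (n : ℕ) : IsEquivariant (A.d n) :=
  A.d_equivariant n

lemma d_d (n : ℕ) (x : (G × A.T (n + 2)) →₀ ℤ) : A.d n (A.d (n + 1) x) = 0 :=
  (A.exact_succ n _).mpr ⟨x, rfl⟩

lemma π_d (x : (G × A.T 1) →₀ ℤ) : A.π (A.d 0 x) = 0 :=
  (A.exact_zero _).mpr ⟨x, rfl⟩

lemma exists_equivariant_lift_d {S : Type} (n : ℕ) (F : ((G × S) →₀ ℤ) →ₗ[ℤ] ((G × A.T n) →₀ ℤ))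
    (hF : IsEquivariant F) (hFp : ∀ x, ∃ y, A.d n y = F x) :
    ∃ F' : ((G × S) →₀ ℤ) →ₗ[ℤ] ((G × A.T (n + 1)) →₀ ℤ),
      IsEquivariant F' ∧ ∀ x, A.d n (F' x) = F x :=
  exists_equivariant_lift (fun g => leftTranslate g) (A.d n) (A.isEquivariant_d n) F hF hFp

namespace ChainMap

noncomputable def comp (ψ : B.ChainMap C) (φ : A.ChainMap B) : A.ChainMap C where
  map n := ψ.map n ∘ₗ φ.map n
  equivariant n := (ψ.equivariant n).comp (φ.equivariant n)
  π_map x := by simp only [LinearMap.comp_apply, ψ.π_map, φ.π_map]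
  d_map n x := by simp only [LinearMap.comp_apply, ψ.d_map, φ.d_map]

@[simp]
lemma comp_map (ψ : B.ChainMap C) (φ : A.ChainMap B) (n : ℕ) (x : (G × A.T n) →₀ ℤ) :
    (ψ.comp φ).map n x = ψ.map n (φ.map n x) :=
  rfl

theorem nonempty (A B : FFRes G H) : Nonempty (A.ChainMap B) := by
  refine (exists_seq_of_forall_exists_succ
    (X := fun n => ((G × A.T n) →₀ ℤ) →ₗ[ℤ] ((G × B.T n) →₀ ℤ))
    (P := fun a => IsEquivariant a ∧ ∀ x, B.π (a x) = A.π x)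
    (r := fun n a b => IsEquivariant a ∧ IsEquivariant b ∧ ∀ x, B.d n (b x) = a (A.d n x))
    ?_ ?_ ?_).elim fun f ⟨hf0, hf⟩ => ⟨⟨f, fun n => (hf n).1, hf0.2, fun n => (hf n).2.2⟩⟩
  · obtain ⟨f₀, hf₀, hπ⟩ := exists_equivariant_lift
      (fun g => Finsupp.mapDomain fun q : cosetUnion G H => (⟨q.1, g • q.2⟩ : cosetUnion G H))
      ((deltaSub G H).subtype ∘ₗ B.π) B.π_equivariant ((deltaSub G H).subtype ∘ₗ A.π)
      A.π_equivariant fun x => ⟨_, congrArg Subtype.val (B.π_surjective (A.π x)).choose_spec⟩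
    exact ⟨f₀, hf₀, fun x => Subtype.ext (hπ x)⟩
  · rintro a ⟨ha, hπ⟩
    obtain ⟨b, hb, hd⟩ := exists_equivariant_lift_d 0 (a ∘ₗ A.d 0)
      (ha.comp (A.isEquivariant_d 0)) fun x =>
        (B.exact_zero _).mp (by rw [LinearMap.comp_apply, hπ, π_d])
    exact ⟨b, ha, hb, hd⟩
  · rintro n a b ⟨_, hb, hba⟩
    obtain ⟨c, hc, hd⟩ := exists_equivariant_lift_d (n + 1) (b ∘ₗ A.d (n + 1))
      (hb.comp (A.isEquivariant_d (n + 1))) fun x =>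
        (B.exact_succ n _).mp (by rw [LinearMap.comp_apply, hba, d_d, map_zero])
    exact ⟨c, hb, hc, hd⟩

structure HomotopyFromId (φ : A.ChainMap A) where
  h : ∀ n, ((G × A.T n) →₀ ℤ) →ₗ[ℤ] ((G × A.T (n + 1)) →₀ ℤ)
  equivariant : ∀ n, IsEquivariant (h n)
  d_h_zero : ∀ x, A.d 0 (h 0 x) = x - φ.map 0 x
  d_h_succ : ∀ n x, A.d (n + 1) (h (n + 1) x) + h n (A.d n x) = x - φ.map (n + 1) x

theorem nonempty_homotopyFromId (φ : A.ChainMap A) : Nonempty φ.HomotopyFromId := by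
  refine (exists_seq_of_forall_exists_succ
    (X := fun n => ((G × A.T n) →₀ ℤ) →ₗ[ℤ] ((G × A.T (n + 1)) →₀ ℤ))
    (P := fun a => IsEquivariant a ∧ ∀ x, A.d 0 (a x) = x - φ.map 0 x)
    (r := fun n a b => IsEquivariant a ∧ IsEquivariant b ∧
      ∀ x, A.d (n + 1) (b x) + a (A.d n x) = x - φ.map (n + 1) x)
    ?_ ?_ ?_).elim fun h ⟨h0, hh⟩ => ⟨⟨h, fun n => (hh n).1, h0.2, fun n => (hh n).2.2⟩⟩
  · exact exists_equivariant_lift_d 0 (LinearMap.id - φ.map 0)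
      (isEquivariant_id.sub (φ.equivariant 0)) fun x =>
        (A.exact_zero _).mp
          (by rw [LinearMap.sub_apply, map_sub, φ.π_map, LinearMap.id_apply, sub_self])
  · rintro a ⟨ha, hda⟩
    obtain ⟨b, hb, hdb⟩ := exists_equivariant_lift_d 1 (LinearMap.id - φ.map 1 - a ∘ₗ A.d 0)
      ((isEquivariant_id.sub (φ.equivariant 1)).sub (ha.comp (A.isEquivariant_d 0))) fun x =>
        (A.exact_succ 0 _).mp (by simp [φ.d_map, hda])
    exact ⟨b, ha, hb, fun x => by simp [hdb]⟩
  · rintro n a b ⟨_, hb, hdb⟩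
    -- `d (x - φ x - b (d x)) = a (d (d x)) = 0`, so the lift through `d` exists by exactness
    obtain ⟨c, hc, hdc⟩ := exists_equivariant_lift_d (n + 2)
      (LinearMap.id - φ.map (n + 2) - b ∘ₗ A.d (n + 1))
      ((isEquivariant_id.sub (φ.equivariant _)).sub (hb.comp (A.isEquivariant_d _))) fun x =>
        (A.exact_succ (n + 1) _).mp (by simp [φ.d_map, ← hdb, d_d])
    exact ⟨c, hb, hc, fun x => by simp [hdc]⟩

end ChainMap

end FFRes

section Transfer

variable {G} {B : BoundingClass} {Λ : Type} {H : Λ → Subgroup G} {L : G → ℝ}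

lemma cosetWeight_nonneg (hL_nonneg : ∀ g, 0 ≤ L g) (q : cosetUnion G H) :
    0 ≤ cosetWeight G H L q :=
  Real.sInf_nonneg fun _ ⟨g, _, hg⟩ => hg ▸ hL_nonneg g

theorem BddContraction.of_chainMaps (hLB : ClassLE LinClass B.carrier)
    (hL_nonneg : ∀ g, 0 ≤ L g) (hL_sub : ∀ g h, L (g * h) ≤ L g + L h) {A R : FFRes G H}
    (f : R.ChainMap A) (g : A.ChainMap R) (hA : BddContraction G B H L A) :
    BddContraction G B H L R := by
  obtain ⟨sΔ, s, hπs, hs0, hs, ⟨φΔ, hφΔ, hsΔ_le⟩, hs_le⟩ := hA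
  obtain ⟨h⟩ := (g.comp f).nonempty_homotopyFromId
  have hw {T : Type} (p : G × T) : 0 ≤ L p.1 + 1 := by linarith [hL_nonneg p.1]
  refine ⟨g.map 0 ∘ₗ sΔ, fun n => g.map (n + 1) ∘ₗ s n ∘ₗ f.map n + h.h n,
    fun v => ?_, fun x => ?_, fun n x => ?_, ?_, fun n => ?_⟩
  · rw [LinearMap.comp_apply, g.π_map, hπs]
  · have hgs := congrArg (g.map 0) (hs0 (f.map 0 x))
    have hh := h.d_h_zero x
    rw [map_add, f.π_map] at hgs
    rw [FFRes.ChainMap.comp_map] at hh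
    simp only [LinearMap.add_apply, LinearMap.comp_apply, map_add, g.d_map]
    linear_combination (norm := abel) hgs + hh
  · have hgs := congrArg (g.map (n + 1)) (hs n (f.map (n + 1) x))
    have hh := h.d_h_succ n x
    rw [map_add, f.d_map] at hgs
    rw [FFRes.ChainMap.comp_map] at hh
    simp only [LinearMap.add_apply, LinearMap.comp_apply, map_add, g.d_map]
    linear_combination (norm := abel) hgs + hh
  · have := A.finT 0
    exact ((g.equivariant 0).isLinearlyBounded hL_nonneg hL_sub).comp_isBounded
      ⟨φΔ, hφΔ, hsΔ_le⟩ fun v => wnorm_nonneg (cosetWeight_nonneg hL_nonneg) _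
  · have := A.finT (n + 1)
    have := R.finT n
    have hs_bdd : B.IsBounded _ _ (s n) := hs_le n
    have hgsf := ((g.equivariant (n + 1)).isLinearlyBounded hL_nonneg hL_sub).comp_isBounded
      (hs_bdd.comp_isLinearlyBounded ((f.equivariant n).isLinearlyBounded hL_nonneg hL_sub)
        (wnorm_nonneg hw) (wnorm_nonneg hw)) (wnorm_nonneg hw)
    exact hgsf.add (((h.equivariant n).isLinearlyBounded hL_nonneg hL_sub).isBounded hLB
      (wnorm_nonneg hw)) (wnorm_nonneg hw) hw

end Transfer

theorem relative_dehn_functions_independent_of_resolution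
    (B : BoundingClass) (hLB : ClassLE LinClass B.carrier)
    (L : G → ℝ)
    (hL_nonneg : ∀ g : G, 0 ≤ L g)
    (hL_sub : ∀ g h : G, L (g * h) ≤ L g + L h)
    {Λ : Type} (H : Λ → Subgroup G)
    (R₀ : FFRes G H) (hR₀ : BddContraction G B H L R₀) :
    ∀ R : FFRes G H, BddContraction G B H L R := fun R =>
  BddContraction.of_chainMaps hLB hL_nonneg hL_sub (FFRes.ChainMap.nonempty R R₀).some
    (FFRes.ChainMap.nonempty R₀ R).some hR₀
end

section
/- Let (G, L) be a group with length function, H a subgroup, and R ⊆ G a set of representatives of the left cosets of H of minimal length (L(r) ≤ L(rh) for all r ∈ R, h ∈ H). For g ∈ G write g = r_g·h_g with r_g ∈ R and h_g ∈ H. Then: (i) L(r_g) ≤ L(g) and L(h_g) ≤ 2·L(g) for all g ∈ G; (ii) for every multiplicative bounding class 𝓑 and all λ, μ ∈ 𝓑 there exists ν ∈ 𝓑 with λ(L(r_g))·μ(L(h_g)) ≤ ν(L(g)) for all g ∈ G; and (iii) for every λ ∈ 𝓑 there exists λ' ∈ 𝓑 with λ(L(rh)) ≤ λ'(L(r))·λ'(L(h))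 for all r ∈ R and h ∈ H. -/
open scoped BigOperators

/-- A bounding class is multiplicative if it is weakly closed under products. -/
def BoundingClass.IsMultiplicative (B : BoundingClass) : Prop :=
  ∀ f ∈ B.carrier, ∀ g ∈ B.carrier, ∃ h ∈ B.carrier, ∀ x : ℝ, 0 ≤ x → f x * g x < h x

/-- minimal-length coset representatives.  With `R` a set of minimal
length representatives of the left cosets of `H` in `G` and `g = r_g · h_g` the
associated decomposition, we have (i) `L r_g ≤ L g` and `L h_g ≤ 2 L g`;
(ii) for a multiplicative bounding class `𝓑` and `λ, μ ∈ 𝓑` there is `ν ∈ 𝓑` with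
`λ (L r_g) · μ (L h_g) ≤ ν (L g)`; (iii) for `λ ∈ 𝓑` there is `λ' ∈ 𝓑` with
`λ (L (r h)) ≤ λ' (L r) · λ' (L h)` for all `r ∈ R`, `h ∈ H`. -/
theorem minimal_coset_representative_estimates
    {G : Type*} [Group G] (L : G → ℝ)
    (hL_nonneg : ∀ g : G, 0 ≤ L g)
    (hL_sub : ∀ g h : G, L (g * h) ≤ L g + L h)
    (hL_inv : ∀ g : G, L g⁻¹ = L g)
    (H : Subgroup G) (R : Set G)
    -- `R` is a system of representatives for the left cosets of `H`…
    (hcover : ∀ g : G, ∃ r ∈ R, ∃ h ∈ H, g = r * h)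
    (hunique : ∀ r ∈ R, ∀ r' ∈ R, (∃ h ∈ H, r' = r * h) → r = r')
    -- …of minimal length
    (hmin : ∀ r ∈ R, ∀ h ∈ H, L r ≤ L (r * h))
    -- the decomposition `g = r_g * h_g`
    (rg hg : G → G)
    (hdec : ∀ g : G, rg g ∈ R ∧ hg g ∈ H ∧ g = rg g * hg g) :
    -- (i)
    (∀ g : G, L (rg g) ≤ L g ∧ L (hg g) ≤ 2 * L g) ∧
    -- (ii)
    (∀ B : BoundingClass, B.IsMultiplicative →
      ∀ lam ∈ B.carrier, ∀ mu ∈ B.carrier, ∃ nu ∈ B.carrier,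
        ∀ g : G, lam (L (rg g)) * mu (L (hg g)) ≤ nu (L g)) ∧
    -- (iii)
    (∀ B : BoundingClass, B.IsMultiplicative →
      ∀ lam ∈ B.carrier, ∃ lam' ∈ B.carrier,
        ∀ r ∈ R, ∀ h ∈ H, lam (L (r * h)) ≤ lam' (L r) * lam' (L h)) := by

  have hi : ∀ g : G, L (rg g) ≤ L g ∧ L (hg g) ≤ 2 * L g := by
    intro g
    obtain ⟨hr, hh, hgh⟩ := hdec g
    have h1 : L (rg g) ≤ L g := by
      have := hmin (rg g) hr (hg g) hh
      rwa [← hgh] at this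
    constructor
    · exact h1
    · have hhg : hg g = (rg g)⁻¹ * g := eq_inv_mul_iff_mul_eq.mpr hgh.symm
      have : L (hg g) ≤ L (rg g)⁻¹ + L g := by
        rw [hhg]; exact hL_sub _ _
      rw [hL_inv] at this
      linarith
  refine ⟨hi, ?_, ?_⟩
  · intro B hmult lam hlam mu hmu
    obtain ⟨mu', hmu', hmu'2⟩ := B.comp_lin mu hmu 2 0 (by norm_num) (by norm_num)
    obtain ⟨nu, hnu, hnu2⟩ := hmult lam hlam mu' hmu'
    refine ⟨nu, hnu, fun g => ?_⟩
    obtain ⟨h1, h2⟩ := hi g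
    have hLg := hL_nonneg g
    have ha : lam (L (rg g)) ≤ lam (L g) := B.mono lam hlam _ _ (hL_nonneg _) h1
    have hb : mu (L (hg g)) ≤ mu' (L g) := by
      have hb1 : mu (L (hg g)) ≤ mu ((2:ℝ) * L g) :=
        B.mono mu hmu _ _ (hL_nonneg _) h2
      have hb2 := hmu'2 (L g) hLg
      push_cast at hb2
      simp only [add_zero] at hb2
      linarith
    have hlp : 0 ≤ lam (L g) := le_of_lt (B.pos lam hlam _ hLg)
    have hmp : 0 ≤ mu (L (hg g)) := le_of_lt (B.pos mu hmu _ (hL_nonneg _))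
    calc lam (L (rg g)) * mu (L (hg g)) ≤ lam (L g) * mu' (L g) :=
          mul_le_mul ha hb hmp hlp
      _ ≤ nu (L g) := le_of_lt (hnu2 (L g) hLg)
  · intro B hmult lam hlam
    obtain ⟨lam2, hlam2, hlam2p⟩ := B.comp_lin lam hlam 2 0 (by norm_num) (by norm_num)
    obtain ⟨lam', hlam', hlam'p⟩ := B.lin_comb 2 ![lam2, fun _ => (1:ℝ)] ![1, 1]
      (by intro i; fin_cases i
          · simpa using hlam2
          · simpa using B.one_mem)
      (by intro i; fin_cases i <;> norm_num)
    have key : ∀ x : ℝ, 0 ≤ x → lam2 x + 1 < lam' x := by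
      intro x hx
      have := hlam'p x hx
      simp [Fin.sum_univ_two] at this
      linarith
    refine ⟨lam', hlam', fun r hr h hh => ?_⟩
    have hr0 := hL_nonneg r
    have hh0 := hL_nonneg h
    set m := max (L r) (L h) with hm
    have hm0 : 0 ≤ m := le_trans hr0 (le_max_left _ _)
    have h1 : L (r * h) ≤ 2 * m := by
      have := hL_sub r h
      have : L (r * h) ≤ L r + L h := this
      have h2 : L r ≤ m := le_max_left _ _
      have h3 : L h ≤ m := le_max_right _ _
      linarith
    have h4 : lam (L (r * h)) ≤ lam ((2:ℝ) * m) :=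
      B.mono lam hlam _ _ (hL_nonneg _) h1
    have h5 := hlam2p m hm0
    push_cast at h5
    simp only [add_zero] at h5
    have h6 : lam2 m + 1 < lam' m := key m hm0
    have h7 : (1:ℝ) < lam' (L r) := by
      have := key (L r) hr0
      have hp : 0 < lam2 (L r) := B.pos lam2 hlam2 _ hr0
      linarith
    have h8 : (1:ℝ) < lam' (L h) := by
      have := key (L h) hh0
      have hp : 0 < lam2 (L h) := B.pos lam2 hlam2 _ hh0
      linarith
    have h9 : lam' m ≤ lam' (L r) * lam' (L h) := by
      rcases max_cases (L r) (L h) with ⟨he, _⟩ | ⟨he, _⟩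
      · rw [hm, he]
        nlinarith [B.pos lam' hlam' (L r) hr0]
      · rw [hm, he]
        nlinarith [B.pos lam' hlam' (L h) hh0]
    linarith
end

section
/- Let φ : ℤ → ℂ be a group homomorphism from the additive group ℤ to the additive group ℂ with φ ≠ 0, and let f : [0,∞) → ℝ be a non-decreasing function such that |φ(n)| ≤ f(log(1 + |n|)) for all n ∈ ℤ. Then limsup_{x→∞} f(x)·e^{−x} ≥ |φ(1)| > 0. In particular there is no such f satisfying f(x)·e^{−x} → 0 as x → ∞. -/
/-!
A homomorphism `φ : ℤ → ℂ` is linear, `‖φ n‖ = |n| ‖φ 1‖`, and `φ ≠ 0` forces `φ 1 ≠ 0`.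
At the points `x = log (1 + n)` the bound gives
`f x * e^{-x} ≥ ‖φ 1‖ * n / (1 + n) → ‖φ 1‖`, and these points tend to infinity.
-/

open Filter Real Topology

lemma AddMonoidHom.map_one_ne_zero_of_int {A : Type*} [AddMonoid A] {φ : ℤ →+ A} (hφ : φ ≠ 0) :
    φ 1 ≠ 0 :=
  fun h => hφ (AddMonoidHom.ext_int (by simp [h]))

lemma AddMonoidHom.norm_apply_int {E : Type*} [SeminormedAddCommGroup E] [NormedSpace ℝ E]
    (φ : ℤ →+ E) (n : ℤ) : ‖φ n‖ = |(n : ℝ)| * ‖φ 1‖ := by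
  have h : φ n = n • φ 1 := by rw [← map_zsmul, smul_eq_mul, mul_one]
  rw [h, norm_zsmul ℝ, Real.norm_eq_abs]

lemma frequently_le_mul_exp_neg {g : ℝ → ℝ} {c : ℝ} (hg : ∀ n : ℕ, c * n ≤ g (log (1 + n)))
    {r : ℝ} (hr : r < c) : ∃ᶠ x in atTop, r ≤ g x * exp (-x) := by
  have hu : Tendsto (fun n : ℕ => log (1 + n)) atTop atTop :=
    tendsto_log_atTop.comp (tendsto_atTop_add_const_left _ 1 tendsto_natCast_atTop_atTop)
  have hlim : Tendsto (fun n : ℕ => c * (n / (n + 1))) atTop (𝓝 c) := by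
    simpa using (tendsto_natCast_div_add_atTop (1 : ℝ)).const_mul c
  refine hu.frequently (Eventually.frequently ?_)
  filter_upwards [hlim.eventually (lt_mem_nhds hr)] with n hn
  calc r ≤ c * (n / (n + 1)) := hn.le
    _ = c * n * exp (-log (1 + n)) := by
      rw [exp_neg, exp_log (by positivity)]
      ring
    _ ≤ g (log (1 + n)) * exp (-log (1 + n)) := by gcongr; exact hg n

lemma le_limsup_mul_exp_neg {g : ℝ → ℝ} {c : ℝ} (hg : ∀ n : ℕ, c * n ≤ g (log (1 + n))) :
    (c : EReal) ≤ limsup (fun x : ℝ => ((g x * exp (-x) : ℝ) : EReal)) atTop := by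
  rw [le_limsup_iff']
  intro y hy
  induction y using EReal.rec with
  | bot => exact Frequently.of_forall fun _ => bot_le
  | coe r =>
    exact (frequently_le_mul_exp_neg hg (EReal.coe_lt_coe_iff.1 hy)).mono
      fun _ h => EReal.coe_le_coe_iff.2 h
  | top => exact absurd hy not_top_lt

theorem no_subexponential_bound_for_log_length_general
    (φ : ℤ →+ ℂ) (hφ : φ ≠ 0)
    (f : ℝ → ℝ)
    (hbound : ∀ n : ℤ, ‖φ n‖ ≤ f (Real.log (1 + |(n : ℝ)|))) :
    0 < ‖φ 1‖ ∧
    (‖φ 1‖ : EReal) ≤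
      Filter.limsup (fun x : ℝ => ((f x * Real.exp (-x) : ℝ) : EReal)) Filter.atTop ∧
    ¬ Filter.Tendsto (fun x : ℝ => f x * Real.exp (-x)) Filter.atTop (nhds 0) := by
  have hφ1 : 0 < ‖φ 1‖ := norm_pos_iff.2 (φ.map_one_ne_zero_of_int hφ)
  have hlin : ∀ n : ℕ, ‖φ 1‖ * n ≤ f (log (1 + n)) := fun n => by
    have h := hbound n
    rwa [φ.norm_apply_int, Int.cast_natCast, abs_of_nonneg n.cast_nonneg, mul_comm] at h
  refine ⟨hφ1, le_limsup_mul_exp_neg hlin, fun htend => ?_⟩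
  obtain ⟨x, hle, hlt⟩ := ((frequently_le_mul_exp_neg hlin (half_lt_self hφ1)).and_eventually
    (htend.eventually (gt_mem_nhds (half_pos hφ1)))).exists
  linarith

/-- Let `φ : ℤ → ℂ` be a nonzero homomorphism of additive groups and let
`f : [0,∞) → ℝ` be non-decreasing with `|φ n| ≤ f (log (1 + |n|))` for all `n : ℤ`.
Then `limsup_{x → ∞} f x * e^{-x} ≥ |φ 1| > 0`; in particular `f x * e^{-x}` does not
tend to `0` as `x → ∞`. -/
theorem no_subexponential_bound_for_log_length
    (φ : ℤ →+ ℂ) (hφ : φ ≠ 0)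
    (f : ℝ → ℝ) (hf : MonotoneOn f (Set.Ici (0 : ℝ)))
    (hbound : ∀ n : ℤ, ‖φ n‖ ≤ f (Real.log (1 + |(n : ℝ)|))) :
    0 < ‖φ 1‖ ∧
    (‖φ 1‖ : EReal) ≤
      Filter.limsup (fun x : ℝ => ((f x * Real.exp (-x) : ℝ) : EReal)) Filter.atTop ∧
    ¬ Filter.Tendsto (fun x : ℝ => f x * Real.exp (-x)) Filter.atTop (nhds 0) :=
  no_subexponential_bound_for_log_length_general φ hφ f hbound
end
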